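/- arXiv:1709.09507 — 2 statements merged into one kernel-verified Lean document; each statement's English description precedes it below -/
import Mathlib

section
/- Let h₁,…,h_k : X → ℝ∞ be proper closed convex on a finite-dimensional Hilbert space, x₀ ∈ X, F(z) := −Σᵢ hᵢ*(zᵢ) − ½‖Σᵢ zᵢ‖² + ⟨x₀, Σᵢ zᵢ⟩, and suppose x* minimizes x ↦ Σᵢ hᵢ(x) + ½‖x − x₀‖² with value α. If a sequence zⁿ ∈ X^k satisfies F(zⁿ) → α and Σᵢ zᵢⁿ → v*, then x₀ − v* = x*, i.e. convergence of the dual objective value to the primal optimal value forces x₀ − lim Σᵢ zᵢⁿ to be the primal minimizer. -/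
open RealInnerProductSpace Filter Topology

/-- Fenchel conjugate of an extended-real-valued function on a real inner product space. -/
noncomputable def fenchelConj {X : Type*} [NormedAddCommGroup X] [InnerProductSpace ℝ X]
    (f : X → EReal) (z : X) : EReal :=
  ⨆ x : X, ((⟪z, x⟫ : ℝ) : EReal) - f x

/-- A proper function: not identically `⊤` and never `⊥`. -/
def ProperFn {X : Type*} (f : X → EReal) : Prop :=
  (∃ x, f x ≠ ⊤) ∧ ∀ x, f x ≠ ⊥

/-- Convexity for extended-real-valued functions. -/
def ConvexFnE {X : Type*} [AddCommGroup X] [Module ℝ X] (f : X → EReal) : Prop :=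
  ∀ x y : X, ∀ t : ℝ, 0 < t → t < 1 →
    f (t • x + (1 - t) • y) ≤ (t : EReal) * f x + ((1 - t : ℝ) : EReal) * f y

/-- `z` is a subgradient of `f` at `x`. -/
def IsSubgrad {X : Type*} [NormedAddCommGroup X] [InnerProductSpace ℝ X]
    (f : X → EReal) (x z : X) : Prop :=
  ∀ y : X, f x + ((⟪z, y - x⟫ : ℝ) : EReal) ≤ f y

/-!
By the Fenchel–Young inequality at the primal minimizer `x*`, every dual point `z`
satisfies `F(z) ≤ α - ½‖x* - (x₀ - Σᵢ zᵢ)‖²`. Passing to the limit along `zⁿ` gives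
`α ≤ α - ½‖x* - (x₀ - v)‖²`, so `x* = x₀ - v`.
-/

namespace EReal

variable {ι : Type*} {s : Finset ι} {f : ι → EReal}

theorem coe_finset_sum (s : Finset ι) (g : ι → ℝ) :
    ((∑ i ∈ s, g i : ℝ) : EReal) = ∑ i ∈ s, (g i : EReal) :=
  map_sum (⟨⟨(↑), coe_zero⟩, coe_add⟩ : ℝ →+ EReal) g s

theorem ne_bot_of_sum_ne_bot (hs : ∑ j ∈ s, f j ≠ ⊥) {i : ι} (hi : i ∈ s) : f i ≠ ⊥ := by
  classical
  rw [← Finset.add_sum_erase s f hi] at hs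
  exact fun hbot => hs (by rw [hbot, bot_add])

theorem ne_top_of_sum_ne_top (hbot : ∀ j ∈ s, f j ≠ ⊥) (hs : ∑ j ∈ s, f j ≠ ⊤) {i : ι}
    (hi : i ∈ s) : f i ≠ ⊤ := by
  classical
  have hrest : ∑ j ∈ s.erase i, f j ≠ ⊥ :=
    Finset.sum_induction f (· ≠ ⊥) (fun _ _ ha hb => add_ne_bot_iff.mpr ⟨ha, hb⟩) zero_ne_bot
      fun j hj => hbot j (Finset.mem_of_mem_erase hj)
  rw [← Finset.add_sum_erase s f hi] at hs
  exact fun htop => hs (by rw [htop, top_add_of_ne_bot hrest])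

theorem coe_toReal_of_sum_eq_coe {r : ℝ} (hs : ∑ j ∈ s, f j = r) {i : ι} (hi : i ∈ s) :
    ((f i).toReal : EReal) = f i := by
  have hbot : ∀ j ∈ s, f j ≠ ⊥ := fun j => ne_bot_of_sum_ne_bot (hs ▸ coe_ne_bot r)
  exact coe_toReal (ne_top_of_sum_ne_top hbot (hs ▸ coe_ne_top r) hi) (hbot i hi)

end EReal

section Duality

variable {X : Type*} [NormedAddCommGroup X] [InnerProductSpace ℝ X]
  {ι : Type*} [Fintype ι]

theorem inner_sub_le_fenchelConj (f : X → EReal) (x z : X) :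
    ((⟪z, x⟫ : ℝ) : EReal) - f x ≤ fenchelConj f z :=
  le_iSup (fun y => ((⟪z, y⟫ : ℝ) : EReal) - f y) x

noncomputable def primalObjective (h : ι → X → EReal) (x₀ x : X) : EReal :=
  (∑ i, h i x) + ((((1:ℝ)/2) * ‖x - x₀‖^2 : ℝ) : EReal)

noncomputable def dualObjective (h : ι → X → EReal) (x₀ : X) (z : ι → X) : EReal :=
  -(∑ i, fenchelConj (h i) (z i)) - ((((1:ℝ)/2) * ‖∑ i, z i‖^2 : ℝ) : EReal)
    + ((⟪x₀, ∑ i, z i⟫ : ℝ) : EReal)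

theorem dualObjective_le_of_primalObjective_eq {h : ι → X → EReal} {x₀ x : X} {α : ℝ}
    (hx : primalObjective h x₀ x = α) (z : ι → X) :
    dualObjective h x₀ z ≤ ((α - (1/2) * ‖x - (x₀ - ∑ i, z i)‖^2 : ℝ) : EReal) := by
  set a : ι → ℝ := fun i => (h i x).toReal
  have hsum : (∑ i, h i x) = ((α - (1/2) * ‖x - x₀‖^2 : ℝ) : EReal) := by
    rw [EReal.coe_sub, ← hx, primalObjective, EReal.add_sub_cancel_right]
  have ha : ∀ i, (a i : EReal) = h i x := fun i =>
    EReal.coe_toReal_of_sum_eq_coe hsum (Finset.mem_univ i)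
  have ha_sum : ∑ i, a i = α - (1/2) * ‖x - x₀‖^2 := by
    rw [← EReal.coe_eq_coe_iff, EReal.coe_finset_sum, ← hsum]
    exact Finset.sum_congr rfl fun i _ => ha i
  have hconj : ((∑ i, (⟪z i, x⟫ - a i) : ℝ) : EReal) ≤ ∑ i, fenchelConj (h i) (z i) := by
    rw [EReal.coe_finset_sum]
    refine Finset.sum_le_sum fun i _ => ?_
    rw [EReal.coe_sub, ha]
    exact inner_sub_le_fenchelConj (h i) x (z i)
  set s := ∑ i, z i
  have hexpand : ‖x - (x₀ - s)‖^2 = ‖x - x₀‖^2 + 2 * (⟪x, s⟫ - ⟪x₀, s⟫) + ‖s‖^2 := by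
    rw [sub_sub_eq_add_sub, add_sub_right_comm, norm_add_sq_real, inner_sub_left]
  have hinner : ∑ i, ⟪z i, x⟫ = ⟪x, s⟫ := by rw [← sum_inner, real_inner_comm]
  calc dualObjective h x₀ z
      ≤ ((-∑ i, (⟪z i, x⟫ - a i) : ℝ) : EReal) - ((((1:ℝ)/2) * ‖s‖^2 : ℝ) : EReal)
          + ((⟪x₀, s⟫ : ℝ) : EReal) := by
        rw [EReal.coe_neg]
        exact add_le_add_left (EReal.sub_le_sub (EReal.neg_le_neg_iff.mpr hconj) le_rfl) _
    _ = ((α - (1/2) * ‖x - (x₀ - s)‖^2 : ℝ) : EReal) := by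
        rw [← EReal.coe_sub, ← EReal.coe_add, EReal.coe_eq_coe_iff, Finset.sum_sub_distrib,
          hinner, ha_sum, hexpand]
        ring

end Duality

theorem stmt7_general {X : Type*} [NormedAddCommGroup X] [InnerProductSpace ℝ X]
    (k : ℕ) (h : Fin k → X → EReal)
    (x₀ xstar : X) (α : ℝ)
    (hval : (∑ i, h i xstar) + ((((1:ℝ)/2) * ‖xstar - x₀‖^2 : ℝ) : EReal) = (α : EReal))
    (z : ℕ → Fin k → X) (v : X)
    (hF : Tendsto (fun n =>
      -(∑ i, fenchelConj (h i) (z n i)) - ((((1:ℝ)/2) * ‖∑ i, z n i‖^2 : ℝ) : EReal)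
        + ((⟪x₀, ∑ i, z n i⟫ : ℝ) : EReal)) atTop (𝓝 (α : EReal)))
    (hv : Tendsto (fun n => ∑ i, z n i) atTop (𝓝 v)) :
    x₀ - v = xstar := by
  have hbound : Tendsto (fun n => ((α - (1/2) * ‖xstar - (x₀ - ∑ i, z n i)‖^2 : ℝ) : EReal))
      atTop (𝓝 ((α - (1/2) * ‖xstar - (x₀ - v)‖^2 : ℝ) : EReal)) :=
    (continuous_coe_real_ereal.tendsto _).comp <|
      (((tendsto_const_nhds.sub (tendsto_const_nhds.sub hv)).norm.pow 2).const_mul _).const_sub _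
  have hle : (α : EReal) ≤ ((α - (1/2) * ‖xstar - (x₀ - v)‖^2 : ℝ) : EReal) :=
    le_of_tendsto_of_tendsto' hF hbound fun n =>
      dualObjective_le_of_primalObjective_eq (h := h) hval (z n)
  have hnorm : ‖xstar - (x₀ - v)‖ = 0 := by
    have := EReal.coe_le_coe_iff.mp hle
    nlinarith [norm_nonneg (xstar - (x₀ - v))]
  exact (sub_eq_zero.mp (norm_eq_zero.mp hnorm)).symm

theorem stmt7 {X : Type*} [NormedAddCommGroup X] [InnerProductSpace ℝ X] [FiniteDimensional ℝ X]
    (k : ℕ) (h : Fin k → X → EReal) (hp : ∀ i, ProperFn (h i))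
    (hl : ∀ i, LowerSemicontinuous (h i)) (hc : ∀ i, ConvexFnE (h i))
    (x₀ xstar : X) (α : ℝ)
    (hval : (∑ i, h i xstar) + ((((1:ℝ)/2) * ‖xstar - x₀‖^2 : ℝ) : EReal) = (α : EReal))
    (hlb : ∀ x : X, (α : EReal) ≤ (∑ i, h i x) + ((((1:ℝ)/2) * ‖x - x₀‖^2 : ℝ) : EReal))
    (z : ℕ → Fin k → X) (v : X)
    (hF : Tendsto (fun n =>
      -(∑ i, fenchelConj (h i) (z n i)) - ((((1:ℝ)/2) * ‖∑ i, z n i‖^2 : ℝ) : EReal)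
        + ((⟪x₀, ∑ i, z n i⟫ : ℝ) : EReal)) atTop (𝓝 (α : EReal)))
    (hv : Tendsto (fun n => ∑ i, z n i) atTop (𝓝 v)) :
    x₀ - v = xstar :=
  stmt7_general k h x₀ xstar α hval z v hF hv
end

section
/- Let h₁,…,h_k be proper closed convex functions on a finite-dimensional Hilbert space X, x₀ ∈ X, S ⊆ {1,…,k}, and fix {z_i}_{i∉S}. If {z_i*}_{i∈S} minimizes Σ_{i∈S} h_i*(z_i) + ½‖−Σ_{i∈S} z_i − Σ_{i∉S} z_i + x₀‖² over {z_i}_{i∈S}, then x* := x₀ − Σ_{i∈S} z_i* − Σ_{i∉S} z_i is the (unique) minimizer of x ↦ Σ_{i∈S} h_i(x) + ½‖x − (x₀ − Σ_{i∉S} z_i)‖². -/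
open RealInnerProductSpace Filter Topology

/-!
Fix `j ∈ S` and the other dual blocks, and let `b = x₀ - ∑_{i ∉ S} z_i - ∑_{i ∈ S, i ≠ j} zstar_i`,
so that `zstar_j` minimizes `h_j^* + ½‖· - b‖²`. If `p` is the proximal point of `h_j` at `b`, then
`b - p` is a subgradient of `h_j` at `p`, and Fenchel–Young shows that this dual objective exceeds
its value at `b - p` by at least `½‖w - (b - p)‖²` at every `w`. Hence `zstar_j = b - p`, that is
`p = xs` and `zstar_j ∈ ∂h_j(xs)`. Summing over `j` gives
`x₀ - ∑_{i ∉ S} z_i - xs ∈ ∂(∑_{i ∈ S} h_i)(xs)`, the optimality condition of the primal proximal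
problem, and the quadratic growth it implies gives uniqueness. Proximal points exist because a
proper closed convex function is bounded below by some `B - C‖x - w‖` (its minimum on a ball,
propagated outwards by convexity), so the sublevel sets of the proximal objective are compact.
-/

theorem EReal.coe_finset_sum_s12 {ι : Type*} (s : Finset ι) (r : ι → ℝ) :
    ((∑ i ∈ s, r i : ℝ) : EReal) = ∑ i ∈ s, (r i : EReal) :=
  map_sum (⟨⟨Real.toEReal, EReal.coe_zero⟩, EReal.coe_add⟩ : ℝ →+ EReal) r s

theorem EReal.sum_ne_bot {ι : Type*} {s : Finset ι} {g : ι → EReal} (h : ∀ i ∈ s, g i ≠ ⊥) :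
    ∑ i ∈ s, g i ≠ ⊥ :=
  Finset.sum_induction g (· ≠ ⊥) (fun _ _ ha hb => by simp [EReal.add_eq_bot_iff, ha, hb])
    EReal.zero_ne_bot h

theorem EReal.sum_ne_top {ι : Type*} {s : Finset ι} {g : ι → EReal} (h : ∀ i ∈ s, g i ≠ ⊤) :
    ∑ i ∈ s, g i ≠ ⊤ :=
  Finset.sum_induction g (· ≠ ⊤) (fun _ _ => EReal.add_ne_top) EReal.zero_ne_top h

theorem Finset.sum_apply_update_of_mem {ι α M : Type*} [DecidableEq ι] [AddCommMonoid M]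
    {s : Finset ι} {j : ι} (hj : j ∈ s) (g : ι → α → M) (z : ι → α) (v : α) :
    ∑ i ∈ s, g i (Function.update z j v i) = g j v + ∑ i ∈ s.erase j, g i (z i) := by
  rw [← Finset.add_sum_erase _ _ hj, Function.update_self]
  congr 1
  exact Finset.sum_congr rfl fun i hi => by rw [Function.update_of_ne (Finset.ne_of_mem_erase hi)]

theorem nonneg_of_forall_nonneg_add_mul {A N : ℝ} (h : ∀ t ∈ Set.Ioo (0 : ℝ) 1, 0 ≤ A + t * N) :
    0 ≤ A := by
  have hlim : Tendsto (fun t : ℝ => A + t * N) (𝓝[>] 0) (𝓝 A) := by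
    refine ((continuous_const.add (continuous_id.mul continuous_const)).tendsto' 0 A ?_).mono_left
      nhdsWithin_le_nhds
    simp
  exact ge_of_tendsto hlim (eventually_of_mem (Ioo_mem_nhdsGT one_pos) h)

theorem LowerSemicontinuous.exists_forall_le_of_isBounded {α β : Type*} [PseudoMetricSpace α]
    [ProperSpace α] [LinearOrder β] {φ : α → β} (hφ : LowerSemicontinuous φ) (w : α)
    (hbdd : Bornology.IsBounded {x | φ x ≤ φ w}) : ∃ p, ∀ x, φ p ≤ φ x := by
  obtain ⟨p, -, hmin⟩ := LowerSemicontinuousOn.exists_isMinOn (s := φ ⁻¹' Set.Iic (φ w))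
    ⟨w, le_rfl⟩ (Metric.isCompact_of_isClosed_isBounded (hφ.isClosed_preimage (φ w)) hbdd)
    (hφ.lowerSemicontinuousOn _)
  refine ⟨p, fun x => ?_⟩
  by_cases hx : φ x ≤ φ w
  · exact hmin hx
  · exact (hmin (le_refl (φ w))).trans (not_le.1 hx).le

theorem ProperFn.exists_eq_coe {X : Type*} {f : X → EReal} (hf : ProperFn f) {x : X}
    (hx : f x ≠ ⊤) : ∃ r : ℝ, f x = r :=
  ⟨(f x).toReal, (EReal.coe_toReal hx (hf.2 x)).symm⟩

theorem ConvexFnE.apply_le_coe {X : Type*} [AddCommGroup X] [Module ℝ X] {f : X → EReal}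
    (hc : ConvexFnE f) {x y : X} {a b : ℝ} (hx : f x = a) (hy : f y = b) {t : ℝ} (ht₀ : 0 < t)
    (ht₁ : t < 1) :
    f (t • x + (1 - t) • y) ≤ ((t * a + (1 - t) * b : ℝ) : EReal) := by
  simpa only [hx, hy, EReal.coe_add, EReal.coe_mul] using hc x y t ht₀ ht₁

section ConvexAnalysis

variable {X : Type*} [NormedAddCommGroup X] [InnerProductSpace ℝ X] {f : X → EReal}

def IsProxPoint (f : X → EReal) (b p : X) : Prop :=
  ∀ x, f p + ((1 / 2 * ‖p - b‖ ^ 2 : ℝ) : EReal) ≤ f x + ((1 / 2 * ‖x - b‖ ^ 2 : ℝ) : EReal)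

theorem fenchelConj_ne_bot_of_ne_top {x : X} (hx : f x ≠ ⊤) (w : X) : fenchelConj f w ≠ ⊥ := by
  refine ne_bot_of_le_ne_bot ?_ (le_iSup (fun x => ((⟪w, x⟫ : ℝ) : EReal) - f x) x)
  simpa [sub_eq_add_neg, EReal.add_eq_bot_iff, EReal.neg_eq_bot_iff] using hx

theorem IsSubgrad.fenchelConj_le {p q : X} {r : ℝ} (hs : IsSubgrad f p q) (hr : f p = r) :
    fenchelConj f q ≤ ((⟪q, p⟫ - r : ℝ) : EReal) := by
  refine iSup_le fun x => ?_
  have hx := hs x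
  rw [hr, ← EReal.coe_add] at hx
  obtain hx_top | hx_top := eq_or_ne (f x) ⊤
  · simp [hx_top]
  lift f x to ℝ using ⟨hx_top, ne_bot_of_le_ne_bot (EReal.coe_ne_bot _) hx⟩ with s
  rw [← EReal.coe_sub, EReal.coe_le_coe_iff]
  rw [EReal.coe_le_coe_iff, inner_sub_right] at hx
  linarith

theorem IsSubgrad.sum {ι : Type*} {s : Finset ι} {g : ι → X → EReal} {p : X} {q : ι → X}
    (hs : ∀ i ∈ s, IsSubgrad (g i) p (q i)) :
    IsSubgrad (fun x => ∑ i ∈ s, g i x) p (∑ i ∈ s, q i) := by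
  intro y
  calc ∑ i ∈ s, g i p + ((⟪∑ i ∈ s, q i, y - p⟫ : ℝ) : EReal)
      = ∑ i ∈ s, (g i p + ((⟪q i, y - p⟫ : ℝ) : EReal)) := by
        rw [sum_inner, EReal.coe_finset_sum_s12, Finset.sum_add_distrib]
    _ ≤ ∑ i ∈ s, g i y := Finset.sum_le_sum fun i hi => hs i hi y

theorem IsSubgrad.add_half_sq_norm_le {b p : X} (hs : IsSubgrad f p (b - p)) (x : X) :
    f p + ((1 / 2 * ‖p - b‖ ^ 2 : ℝ) : EReal) + ((1 / 2 * ‖x - p‖ ^ 2 : ℝ) : EReal)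
      ≤ f x + ((1 / 2 * ‖x - b‖ ^ 2 : ℝ) : EReal) := by
  have hsplit : 1 / 2 * ‖p - b‖ ^ 2 + 1 / 2 * ‖x - p‖ ^ 2
      = ⟪b - p, x - p⟫ + 1 / 2 * ‖x - b‖ ^ 2 := by
    rw [show x - b = (x - p) + (p - b) by abel, norm_add_sq_real,
      show b - p = -(p - b) by abel, inner_neg_left, real_inner_comm]
    ring
  rw [add_assoc, ← EReal.coe_add, hsplit, EReal.coe_add, ← add_assoc]
  gcongr
  exact hs x

theorem IsSubgrad.isProxPoint {b p : X} (hs : IsSubgrad f p (b - p)) : IsProxPoint f b p :=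
  fun x => le_trans (le_add_of_nonneg_right (EReal.coe_nonneg.2 (by positivity)))
    (hs.add_half_sq_norm_le x)

theorem IsSubgrad.eq_of_add_half_sq_norm_le {b p x : X} (hs : IsSubgrad f p (b - p))
    (hp_top : f p ≠ ⊤) (hp_bot : f p ≠ ⊥)
    (hx : f x + ((1 / 2 * ‖x - b‖ ^ 2 : ℝ) : EReal) ≤ f p + ((1 / 2 * ‖p - b‖ ^ 2 : ℝ) : EReal)) :
    x = p := by
  have h := (hs.add_half_sq_norm_le x).trans hx
  lift f p to ℝ using ⟨hp_top, hp_bot⟩ with r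
  norm_cast at h
  rw [← sub_eq_zero, ← norm_eq_zero]
  nlinarith [norm_nonneg (x - p)]

theorem IsProxPoint.isSubgrad (hbot : ∀ x, f x ≠ ⊥) (hc : ConvexFnE f) {b p : X}
    (hp : IsProxPoint f b p) (hp_top : f p ≠ ⊤) : IsSubgrad f p (b - p) := by
  intro y
  obtain hy | hy := eq_or_ne (f y) ⊤
  · simp [hy]
  lift f y to ℝ using ⟨hy, hbot y⟩ with fy hfy
  lift f p to ℝ using ⟨hp_top, hbot p⟩ with fp hfp
  have key : ∀ t ∈ Set.Ioo (0 : ℝ) 1,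
      0 ≤ (fy - fp - ⟪b - p, y - p⟫) + t * (1 / 2 * ‖y - p‖ ^ 2) := by
    rintro t ⟨ht₀, ht₁⟩
    have hprox := (hp (t • y + (1 - t) • p)).trans
      (add_le_add_left (hc.apply_le_coe hfy.symm hfp.symm ht₀ ht₁) _)
    rw [← hfp] at hprox
    norm_cast at hprox
    rw [show t • y + (1 - t) • p - b = t • (y - p) - (b - p) by module,
      norm_sub_sq_real (t • (y - p)), inner_smul_left, norm_smul, Real.norm_eq_abs,
      abs_of_pos ht₀, RCLike.conj_to_real,
      show p - b = -(b - p) by abel, norm_neg] at hprox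
    have : 0 ≤ t * ((fy - fp - ⟪b - p, y - p⟫) + t * (1 / 2 * ‖y - p‖ ^ 2)) := by
      rw [real_inner_comm] at hprox; nlinarith
    exact (mul_nonneg_iff_of_pos_left ht₀).1 this
  have := nonneg_of_forall_nonneg_add_mul key
  rw [← EReal.coe_add, EReal.coe_le_coe_iff]
  linarith

theorem IsSubgrad.fenchelConj_add_half_sq_norm_le {b q : X} {r : ℝ}
    (hs : IsSubgrad f (b - q) q) (hr : f (b - q) = r) (w : X) :
    fenchelConj f q + ((1 / 2 * ‖q - b‖ ^ 2 : ℝ) : EReal) + ((1 / 2 * ‖w - q‖ ^ 2 : ℝ) : EReal)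
      ≤ fenchelConj f w + ((1 / 2 * ‖w - b‖ ^ 2 : ℝ) : EReal) := by
  have hw : ((⟪w, b - q⟫ - r : ℝ) : EReal) ≤ fenchelConj f w := by
    rw [EReal.coe_sub, ← hr]
    exact le_iSup (fun x => ((⟪w, x⟫ : ℝ) : EReal) - f x) (b - q)
  calc fenchelConj f q + ((1 / 2 * ‖q - b‖ ^ 2 : ℝ) : EReal) + ((1 / 2 * ‖w - q‖ ^ 2 : ℝ) : EReal)
      ≤ ((⟪q, b - q⟫ - r : ℝ) : EReal) + ((1 / 2 * ‖q - b‖ ^ 2 : ℝ) : EReal)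
          + ((1 / 2 * ‖w - q‖ ^ 2 : ℝ) : EReal) := by
        gcongr
        exact hs.fenchelConj_le hr
    _ = ((⟪w, b - q⟫ - r : ℝ) : EReal) + ((1 / 2 * ‖w - b‖ ^ 2 : ℝ) : EReal) := by
        norm_cast
        rw [show w - b = (w - q) - (b - q) by abel, norm_sub_sq_real (w - q), inner_sub_left,
          real_inner_comm, norm_sub_rev q b]
        ring
    _ ≤ fenchelConj f w + ((1 / 2 * ‖w - b‖ ^ 2 : ℝ) : EReal) := by gcongr

variable [FiniteDimensional ℝ X]

theorem exists_forall_coe_sub_mul_norm_le (hp : ProperFn f) (hl : LowerSemicontinuous f)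
    (hc : ConvexFnE f) :
    ∃ w, f w ≠ ⊤ ∧ ∃ B C : ℝ, 0 ≤ C ∧ ∀ x, ((B - C * ‖x - w‖ : ℝ) : EReal) ≤ f x := by
  obtain ⟨w, hw⟩ := hp.1
  obtain ⟨F, hF⟩ := hp.exists_eq_coe hw
  obtain ⟨p, -, hpmin⟩ := LowerSemicontinuousOn.exists_isMinOn
    ⟨w, Metric.mem_closedBall_self zero_le_one⟩ (isCompact_closedBall w 1)
    (hl.lowerSemicontinuousOn _)
  have hpF : f p ≤ F := hF ▸ hpmin (Metric.mem_closedBall_self zero_le_one)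
  obtain ⟨B, hB⟩ := hp.exists_eq_coe (ne_top_of_le_ne_top (EReal.coe_ne_top F) hpF)
  have hBF : B ≤ F := by rw [hB] at hpF; exact_mod_cast hpF
  have hball : ∀ y, ‖y - w‖ ≤ 1 → (B : EReal) ≤ f y := fun y hy =>
    hB ▸ hpmin (mem_closedBall_iff_norm.2 hy)
  refine ⟨w, hw, B, F - B, sub_nonneg.2 hBF, fun x => ?_⟩
  obtain hx | hx := le_or_gt ‖x - w‖ 1
  · refine le_trans ?_ (hball x hx)
    exact EReal.coe_le_coe_iff.2 (sub_le_self _ (mul_nonneg (sub_nonneg.2 hBF) (norm_nonneg _)))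
  obtain hx_top | hx_top := eq_or_ne (f x) ⊤
  · simp [hx_top]
  obtain ⟨G, hG⟩ := hp.exists_eq_coe hx_top
  set r := ‖x - w‖
  have hr : 0 < r := one_pos.trans hx
  -- the point of the segment `[w, x]` at distance one from `w`
  have hy : ‖r⁻¹ • x + (1 - r⁻¹) • w - w‖ ≤ 1 := by
    rw [show r⁻¹ • x + (1 - r⁻¹) • w - w = r⁻¹ • (x - w) by module, norm_smul,
      Real.norm_eq_abs, abs_inv, abs_of_pos hr, inv_mul_cancel₀ hr.ne']
  have hseg := (hball _ hy).trans (hc.apply_le_coe hG hF (inv_pos.2 hr) (inv_lt_one_of_one_lt₀ hx))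
  have hseg' : B ≤ r⁻¹ * G + (1 - r⁻¹) * F := by exact_mod_cast hseg
  have hmul : r * B ≤ G + (r - 1) * F := by
    have := mul_le_mul_of_nonneg_left hseg' hr.le
    rwa [mul_add, ← mul_assoc, mul_inv_cancel₀ hr.ne', one_mul, ← mul_assoc, mul_sub, mul_one,
      mul_inv_cancel₀ hr.ne'] at this
  rw [hG, EReal.coe_le_coe_iff]
  nlinarith

theorem exists_isProxPoint (hp : ProperFn f) (hl : LowerSemicontinuous f) (hc : ConvexFnE f)
    (b : X) : ∃ p, f p ≠ ⊤ ∧ IsProxPoint f b p := by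
  set φ : X → EReal := fun x => f x + ((1 / 2 * ‖x - b‖ ^ 2 : ℝ) : EReal)
  have hφ : LowerSemicontinuous φ :=
    hl.add' (continuous_coe_real_ereal.comp (by fun_prop)).lowerSemicontinuous
      fun x => EReal.continuousAt_add (.inr (EReal.coe_ne_bot _)) (.inr (EReal.coe_ne_top _))
  obtain ⟨w, hw, B, C, hC, hlow⟩ := exists_forall_coe_sub_mul_norm_le hp hl hc
  obtain ⟨F, hF⟩ := hp.exists_eq_coe hw
  have hBF : B ≤ F := by simpa [hF] using hlow w
  have hφw : φ w = ((F + 1 / 2 * ‖w - b‖ ^ 2 : ℝ) : EReal) := by simp only [φ, hF, EReal.coe_add]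
  set K := F - B + 1 / 2 * ‖w - b‖ ^ 2 + C * ‖w - b‖
  have hsub : {x | φ x ≤ φ w} ⊆ Metric.closedBall w (2 * C + 2 * K + 1 + ‖w - b‖) := by
    intro x hx
    have hquad : ((B - C * ‖x - w‖ + 1 / 2 * ‖x - b‖ ^ 2 : ℝ) : EReal) ≤ φ w :=
      le_trans (by rw [EReal.coe_add]; exact add_le_add_left (hlow x) _) hx
    rw [hφw, EReal.coe_le_coe_iff] at hquad
    have htri : ‖x - w‖ ≤ ‖x - b‖ + ‖w - b‖ := norm_sub_le_norm_sub_add_norm_sub x b w |>.trans_eq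
      (by rw [norm_sub_rev b w])
    have hK : 0 ≤ K := by positivity
    have hu : ‖x - b‖ ≤ 2 * C + 2 * K + 1 := by
      by_contra! hu
      have hCK : 1 / 2 * ‖x - b‖ ^ 2 ≤ K + C * ‖x - b‖ := by
        simp only [K]
        nlinarith [mul_le_mul_of_nonneg_left htri hC]
      nlinarith [mul_nonneg hK (by linarith : (0 : ℝ) ≤ ‖x - b‖ - 1)]
    rw [mem_closedBall_iff_norm]
    linarith
  obtain ⟨p, hpmin⟩ := hφ.exists_forall_le_of_isBounded w (Metric.isBounded_closedBall.subset hsub)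
  refine ⟨p, fun hp_top => ?_, hpmin⟩
  have h := (hpmin w).trans_eq hφw
  simp only [φ, hp_top, EReal.top_add_of_ne_bot (EReal.coe_ne_bot _), top_le_iff,
    EReal.coe_ne_top] at h

theorem exists_fenchelConj_ne_top (hp : ProperFn f) (hl : LowerSemicontinuous f)
    (hc : ConvexFnE f) : ∃ w, fenchelConj f w ≠ ⊤ := by
  obtain ⟨p, hp_top, hprox⟩ := exists_isProxPoint hp hl hc 0
  obtain ⟨r, hr⟩ := hp.exists_eq_coe hp_top
  exact ⟨0 - p, ne_top_of_le_ne_top (EReal.coe_ne_top _)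
    ((hprox.isSubgrad hp.2 hc hp_top).fenchelConj_le hr)⟩

theorem IsProxPoint.isSubgrad_of_fenchelConj (hp : ProperFn f) (hl : LowerSemicontinuous f)
    (hc : ConvexFnE f) {b z : X} (hz : IsProxPoint (fenchelConj f) b z) :
    IsSubgrad f (b - z) z ∧ f (b - z) ≠ ⊤ := by
  obtain ⟨p, hp_top, hprox⟩ := exists_isProxPoint hp hl hc b
  obtain ⟨r, hr⟩ := hp.exists_eq_coe hp_top
  have hs : IsSubgrad f (b - (b - p)) (b - p) := by
    rw [sub_sub_cancel]; exact hprox.isSubgrad hp.2 hc hp_top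
  have hr' : f (b - (b - p)) = r := by rw [sub_sub_cancel, hr]
  have hconj := hs.fenchelConj_le hr'
  lift fenchelConj f (b - p) to ℝ using
    ⟨ne_top_of_le_ne_top (EReal.coe_ne_top _) hconj, fenchelConj_ne_bot_of_ne_top hp_top _⟩
    with s hs_eq
  -- the dual objective grows quadratically away from `b - p`, and `z` minimizes it
  have h := (hs.fenchelConj_add_half_sq_norm_le hr' z).trans (hz (b - p))
  rw [← hs_eq] at h
  norm_cast at h
  have hz_eq : z = b - p := by
    rw [← sub_eq_zero, ← norm_eq_zero]
    nlinarith [norm_nonneg (z - (b - p))]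
  rw [hz_eq, sub_sub_cancel]
  exact ⟨hprox.isSubgrad hp.2 hc hp_top, hp_top⟩

theorem isSubgrad_of_isMin_dual {ι : Type*} {f : ι → X → EReal} (hp : ∀ i, ProperFn (f i))
    (hl : ∀ i, LowerSemicontinuous (f i)) (hc : ∀ i, ConvexFnE (f i)) {S : Finset ι} {a : X}
    {z : ι → X}
    (hmin : ∀ y : ι → X,
      ∑ i ∈ S, fenchelConj (f i) (z i) + ((1 / 2 * ‖a - ∑ i ∈ S, z i‖ ^ 2 : ℝ) : EReal)
        ≤ ∑ i ∈ S, fenchelConj (f i) (y i) + ((1 / 2 * ‖a - ∑ i ∈ S, y i‖ ^ 2 : ℝ) : EReal)) :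
    ∀ j ∈ S, IsSubgrad (f j) (a - ∑ i ∈ S, z i) (z j) ∧ f j (a - ∑ i ∈ S, z i) ≠ ⊤ := by
  classical
  have hbot : ∀ i v, fenchelConj (f i) v ≠ ⊥ := fun i =>
    fenchelConj_ne_bot_of_ne_top (hp i).1.choose_spec
  choose w hw using fun i => exists_fenchelConj_ne_top (hp i) (hl i) (hc i)
  have hsum : ∑ i ∈ S, fenchelConj (f i) (z i) ≠ ⊤ :=
    (EReal.add_ne_top_iff_ne_top_left (EReal.coe_ne_bot _) (EReal.coe_ne_top _)).1
      (ne_top_of_le_ne_top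
        (EReal.add_ne_top (EReal.sum_ne_top fun i _ => hw i) (EReal.coe_ne_top _)) (hmin w))
  intro j hj
  rw [← Finset.add_sum_erase _ _ hj] at hsum
  have hrest_bot := EReal.sum_ne_bot fun i (_ : i ∈ S.erase j) => hbot i (z i)
  lift ∑ i ∈ S.erase j, fenchelConj (f i) (z i) to ℝ using
    ⟨((EReal.add_ne_top_iff_ne_top₂ (hbot j (z j)) hrest_bot).1 hsum).2, hrest_bot⟩ with R hR
  have hb : a - ∑ i ∈ S, z i = a - ∑ i ∈ S.erase j, z i - z j := by
    rw [← Finset.add_sum_erase S z hj]; abel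
  rw [hb]
  refine IsProxPoint.isSubgrad_of_fenchelConj (hp j) (hl j) (hc j) fun v => ?_
  have h := hmin (Function.update z j v)
  rw [Finset.sum_apply_update_of_mem hj (fun i => fenchelConj (f i)),
    Finset.sum_apply_update_of_mem hj (fun _ x => x), ← Finset.add_sum_erase S z hj,
    ← Finset.add_sum_erase S (fun i => fenchelConj (f i) (z i)) hj, ← hR,
    add_right_comm, add_right_comm (fenchelConj (f j) v),
    (EReal.addLECancellable_coe R).add_le_add_iff_right] at h
  simpa only [show ∀ u, a - (u + ∑ i ∈ S.erase j, z i) = -(u - (a - ∑ i ∈ S.erase j, z i))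
    from fun u => by abel, norm_neg] using h

end ConvexAnalysis

theorem stmt12 {X : Type*} [NormedAddCommGroup X] [InnerProductSpace ℝ X] [FiniteDimensional ℝ X]
    (k : ℕ) (h : Fin k → X → EReal) (hp : ∀ i, ProperFn (h i))
    (hl : ∀ i, LowerSemicontinuous (h i)) (hc : ∀ i, ConvexFnE (h i))
    (x₀ : X) (S : Finset (Fin k)) (z zstar : Fin k → X)
    (hmin : ∀ y : Fin k → X,
      (∑ i ∈ S, fenchelConj (h i) (zstar i))
          + ((((1:ℝ)/2) * ‖-(∑ i ∈ S, zstar i) - (∑ i ∈ Sᶜ, z i) + x₀‖^2 : ℝ) : EReal)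
        ≤ (∑ i ∈ S, fenchelConj (h i) (y i))
          + ((((1:ℝ)/2) * ‖-(∑ i ∈ S, y i) - (∑ i ∈ Sᶜ, z i) + x₀‖^2 : ℝ) : EReal)) :
    let xs : X := x₀ - (∑ i ∈ S, zstar i) - (∑ i ∈ Sᶜ, z i)
    let P : X → EReal := fun x =>
      (∑ i ∈ S, h i x) + ((((1:ℝ)/2) * ‖x - (x₀ - ∑ i ∈ Sᶜ, z i)‖^2 : ℝ) : EReal)
    (∀ x : X, P xs ≤ P x) ∧ (∀ x : X, (∀ y : X, P x ≤ P y) → x = xs) := by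
  intro xs P
  have hxs : xs = x₀ - ∑ i ∈ Sᶜ, z i - ∑ i ∈ S, zstar i := sub_right_comm _ _ _
  have hdual := isSubgrad_of_isMin_dual hp hl hc (S := S) (a := x₀ - ∑ i ∈ Sᶜ, z i) (z := zstar)
    fun y => by
      simpa only [show ∀ u, -u - ∑ i ∈ Sᶜ, z i + x₀ = x₀ - ∑ i ∈ Sᶜ, z i - u from
        fun u => by abel] using hmin y
  rw [← hxs] at hdual
  have hsub : IsSubgrad (fun x => ∑ i ∈ S, h i x) xs (x₀ - ∑ i ∈ Sᶜ, z i - xs) := by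
    rw [show x₀ - ∑ i ∈ Sᶜ, z i - xs = ∑ i ∈ S, zstar i by rw [hxs, sub_sub_cancel]]
    exact IsSubgrad.sum fun i hi => (hdual i hi).1
  refine ⟨hsub.isProxPoint, fun x hx => hsub.eq_of_add_half_sq_norm_le ?_ ?_ (hx xs)⟩
  · exact EReal.sum_ne_top fun i hi => (hdual i hi).2
  · exact EReal.sum_ne_bot fun i _ => (hp i).2 xs
end
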